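/- arXiv:2605.11397 — 4 statements merged into one kernel-verified Lean document; each statement's English description precedes it below -/
import Mathlib

section
/- Let X be a topological space and P ∈ X with D_P ≠ ∅ and S_P ≠ ∅. Then there exists a maximal chain C in the inclusion-ordered family F of test sets at P such that ⋂_{A ∈ C} A is not a test set (a 'bad' maximal chain). -/
/-! Call the elements of `D(f)` witnesses for `f`. If some discontinuous function has no witness,
there are no test sets at all (equivalently, `S_P` is not one), and the empty chain is a bad
maximal chain. Otherwise fix a discontinuous `f₀` and let `A k` consist of the
non-witnesses for `f₀` together with the witnesses for `f₀` whose first `k` terms equal `P`. Each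
`A k` is a test set, since any witness can be made to start with `k` copies of `P`, and the `A k`
decrease. The only witnesses for `f₀` left in `⋂ k, A k` would be the constant sequence `P`, which
is no witness; so any maximal chain of test sets through all the `A k` is bad. -/

open Filter Topology Set

/-- The family `S_P` of sequences in `X` converging to `P`. -/
def seqTo {X : Type*} [TopologicalSpace X] (P : X) : Set (ℕ → X) :=
  {T | Tendsto T atTop (𝓝 P)}

/-- The witness family `D(f)` of sequences converging to `P` along which
`f` fails to converge to `f P`. -/
def witnessSet {X : Type*} [TopologicalSpace X] (P : X) (f : X → ℝ) : Set (ℕ → X) :=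
  {T | Tendsto T atTop (𝓝 P) ∧ ¬ Tendsto (fun n => f (T n)) atTop (𝓝 (f P))}

/-- `A` is a test set at `P`: a subfamily of `S_P` meeting the witness family `D(f)`
of every function `f` discontinuous at `P`. -/
def IsTestSet {X : Type*} [TopologicalSpace X] (P : X) (A : Set (ℕ → X)) : Prop :=
  A ⊆ seqTo P ∧ ∀ f : X → ℝ, ¬ ContinuousAt f P → (A ∩ witnessSet P f).Nonempty

theorem IsChain.exists_maximal_subset {α : Type*} {r : α → α → Prop} {s c : Set α}
    (hcs : c ⊆ s) (hc : IsChain r c) :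
    ∃ M ⊆ s, c ⊆ M ∧ IsChain r M ∧ ∀ M' ⊆ s, IsChain r M' → M ⊆ M' → M' = M := by
  have hval : ∀ x y : s, r x y → r x y := fun _ _ => id
  obtain ⟨M, hM, hcM⟩ :=
    (hc.preimage (fun x y : s => r x y) r _ Subtype.val_injective hval).exists_maxChain
  refine ⟨Subtype.val '' M, Subtype.coe_image_subset s M, fun x hx => ⟨⟨x, hcs hx⟩, hcM hx, rfl⟩,
    hM.isChain.image_of_map_rel _ _ _ hval, fun M' hM's hM' hMM' => ?_⟩
  have hpre : M = Subtype.val ⁻¹' M' :=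
    hM.2 (hM'.preimage _ _ _ Subtype.val_injective hval) fun x hx => hMM' ⟨x, hx, rfl⟩
  rw [hpre, Subtype.image_preimage_coe, inter_eq_right.2 hM's]

section

variable {X : Type*} [TopologicalSpace X] {P : X}

theorem witnessSet_congr {f : X → ℝ} {T T' : ℕ → X} (h : T =ᶠ[atTop] T') :
    T ∈ witnessSet P f ↔ T' ∈ witnessSet P f :=
  and_congr (tendsto_congr' h) (not_congr (tendsto_congr' (h.fun_comp f)))

theorem IsTestSet.isTestSet_seqTo {A : Set (ℕ → X)} (hA : IsTestSet P A) :
    IsTestSet P (seqTo P) :=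
  ⟨subset_rfl, fun f hf => let ⟨T, _, hT⟩ := hA.2 f hf; ⟨T, hT.1, hT⟩⟩

variable (P) in
def prefixTestSet (f : X → ℝ) (k : ℕ) : Set (ℕ → X) :=
  {T | T ∈ seqTo P ∧ (T ∉ witnessSet P f ∨ ∀ n < k, T n = P)}

theorem prefixTestSet_antitone (f : X → ℝ) : Antitone (prefixTestSet P f) :=
  fun _ _ hjk _ hT => ⟨hT.1, hT.2.imp_right fun h n hn => h n (hn.trans_le hjk)⟩

theorem isTestSet_prefixTestSet (hS : IsTestSet P (seqTo P)) (f : X → ℝ) (k : ℕ) :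
    IsTestSet P (prefixTestSet P f k) := by
  refine ⟨fun T hT => hT.1, fun g hg => ?_⟩
  obtain ⟨T, -, hT⟩ := hS.2 g hg
  let T' : ℕ → X := fun n => if n < k then P else T n
  have hT'T : T' =ᶠ[atTop] T :=
    eventually_atTop.2 ⟨k, fun n hn => if_neg (Nat.not_lt.2 hn)⟩
  have hT' : T' ∈ witnessSet P g := (witnessSet_congr hT'T).2 hT
  exact ⟨T', ⟨hT'.1, Or.inr fun n hn => if_pos hn⟩, hT'⟩

theorem iInter_prefixTestSet_inter_witnessSet (f : X → ℝ) :
    (⋂ k, prefixTestSet P f k) ∩ witnessSet P f = ∅ := by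
  refine eq_empty_of_forall_notMem fun T ⟨hTA, hTw⟩ => hTw.2 ?_
  have hTP : ∀ n, T n = P := fun n =>
    ((mem_iInter.1 hTA (n + 1)).2.resolve_left (not_not.2 hTw)) n n.lt_succ_self
  simp only [hTP]
  exact tendsto_const_nhds

end

theorem exists_bad_maximal_chain_general {X : Type*} [TopologicalSpace X] (P : X)
    (hD : ∃ f : X → ℝ, ¬ ContinuousAt f P) :
    ∃ C : Set (Set (ℕ → X)),
      (∀ A ∈ C, IsTestSet P A) ∧ IsChain (· ⊆ ·) C ∧
      (∀ C' : Set (Set (ℕ → X)),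
        (∀ A ∈ C', IsTestSet P A) → IsChain (· ⊆ ·) C' → C ⊆ C' → C' = C) ∧
      ¬ IsTestSet P (⋂₀ C) := by
  by_cases hS : IsTestSet P (seqTo P)
  · obtain ⟨f, hf⟩ := hD
    obtain ⟨C, hCtest, hAC, hC, hCmax⟩ :=
      ((prefixTestSet_antitone (P := P) f).isChain_range).exists_maximal_subset
        (s := {A | IsTestSet P A}) (range_subset_iff.2 (isTestSet_prefixTestSet hS f))
    refine ⟨C, hCtest, hC, hCmax, fun hbad => ?_⟩
    have hsub : ⋂₀ C ⊆ ⋂ k, prefixTestSet P f k := sInter_range _ ▸ sInter_subset_sInter hAC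
    obtain ⟨T, hT⟩ := hbad.2 f hf
    exact (iInter_prefixTestSet_inter_witnessSet f).subset ⟨hsub hT.1, hT.2⟩
  · refine ⟨∅, fun _ h => h.elim, IsChain.empty, fun C' hC'test _ _ => ?_, fun h => ?_⟩
    · exact eq_empty_of_forall_notMem fun A hA => hS (hC'test A hA).isTestSet_seqTo
    · exact hS h.isTestSet_seqTo

/-- Existence of a bad maximal chain: a maximal chain of test sets whose intersection
is not a test set. -/
theorem exists_bad_maximal_chain {X : Type*} [TopologicalSpace X] (P : X)
    (hD : ∃ f : X → ℝ, ¬ ContinuousAt f P)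
    (hS : (seqTo P).Nonempty) :
    ∃ C : Set (Set (ℕ → X)),
      (∀ A ∈ C, IsTestSet P A) ∧ IsChain (· ⊆ ·) C ∧
      (∀ C' : Set (Set (ℕ → X)),
        (∀ A ∈ C', IsTestSet P A) → IsChain (· ⊆ ·) C' → C ⊆ C' → C' = C) ∧
      ¬ IsTestSet P (⋂₀ C) :=
  exists_bad_maximal_chain_general P hD
end

section
/- Let X be a topological space and P ∈ X; assume (X,P) is Fréchet–Urysohn at P, X is T1 at P, P is non-isolated, and D_P ≠ ∅. Let M ⊆ I_P be a MAD family, and for each M ∈ M let T^M : ℕ → X be an injective sequence converging to P with range M. Then A_min := {T^M : M ∈ M} is a test set: for every f : X → ℝ discontinuous at P, some T^M satisfies that f(T^M_n) does not converge to f(P). -/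
open Filter Topology Set

/-- The family `I_P`: countably infinite subsets of `X \ {P}` that are almost contained
in every open neighborhood of `P`. -/
def rangeFamily {X : Type*} [TopologicalSpace X] (P : X) : Set (Set X) :=
  {M | M ⊆ {P}ᶜ ∧ M.Countable ∧ M.Infinite ∧
    ∀ U : Set X, IsOpen U → P ∈ U → (M \ U).Finite}

/-- `ℳ ⊆ I_P` is a maximal almost disjoint (MAD) family: distinct members have finite
intersection, and every member of `I_P` meets some member of `ℳ` in an infinite set. -/
def IsMadFamily {X : Type*} [TopologicalSpace X] (P : X) (ℳ : Set (Set X)) : Prop :=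
  ℳ ⊆ rangeFamily P ∧
    (∀ A ∈ ℳ, ∀ B ∈ ℳ, A ≠ B → (A ∩ B).Finite) ∧
    (∀ S ∈ rangeFamily P, ∃ N ∈ ℳ, (S ∩ N).Infinite)

/-! Discontinuity of `f` at `P` gives an `ε > 0` such that `P` lies in the closure of
`A = {x | ε ≤ |f x - f P|}`. By the Fréchet–Urysohn property a sequence `a` in `A` converges
to `P`; since `P ∉ A` and `X` is T1 at `P`, its range is a member of `I_P`. Maximality of `ℳ`
yields `N ∈ ℳ` meeting `range a` in an infinite set, so the enumeration `T N` visits `A`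
infinitely often and `f ∘ T N` cannot converge to `f P`. -/

section

variable {X : Type*} [TopologicalSpace X] {P : X}

lemma exists_pos_mem_closure_le_dist_of_not_continuousAt {α : Type*} [PseudoMetricSpace α]
    {f : X → α} (hf : ¬ ContinuousAt f P) :
    ∃ ε > 0, P ∈ closure {x | ε ≤ dist (f x) (f P)} := by
  contrapose! hf
  refine Metric.continuousAt_iff'.2 fun ε hε => ?_
  simpa [mem_closure_iff_frequently] using hf ε hε

lemma compl_mem_nhds_of_finite (hT1 : ∀ x : X, x ≠ P → ∃ U : Set X, IsOpen U ∧ P ∈ U ∧ x ∉ U)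
    {s : Set X} (hs : s.Finite) (hP : P ∉ s) : sᶜ ∈ 𝓝 P := by
  rw [← biUnion_of_singleton s, compl_iUnion₂, biInter_mem hs]
  intro x hx
  obtain ⟨U, hU, hPU, hxU⟩ := hT1 x (ne_of_mem_of_not_mem hx hP)
  exact mem_of_superset (hU.mem_nhds hPU) fun y hy => by rintro rfl; exact hxU hy

lemma range_mem_rangeFamily (hT1 : ∀ x : X, x ≠ P → ∃ U : Set X, IsOpen U ∧ P ∈ U ∧ x ∉ U)
    {a : ℕ → X} (ha : Tendsto a atTop (𝓝 P)) (hne : ∀ n, a n ≠ P) :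
    range a ∈ rangeFamily P := by
  have hP : P ∉ range a := by rintro ⟨n, hn⟩; exact hne n hn
  refine ⟨subset_compl_singleton_iff.2 hP, countable_range a, fun hfin => ?_, fun U hU hPU => ?_⟩
  · -- `a` would eventually leave its own range
    obtain ⟨n, hn⟩ := (ha.eventually (compl_mem_nhds_of_finite hT1 hfin hP)).exists
    exact hn (mem_range_self n)
  · have hfew : {n | a n ∉ U}.Finite := by
      rw [← Nat.cofinite_eq_atTop] at ha
      exact ha.eventually (hU.mem_nhds hPU)
    refine (hfew.image a).subset ?_
    rintro _ ⟨⟨n, rfl⟩, hn⟩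
    exact mem_image_of_mem a hn

end

lemma frequently_mem_of_infinite_range_inter {β : Type*} {u : ℕ → β} {A : Set β}
    (h : (range u ∩ A).Infinite) : ∃ᶠ n in atTop, u n ∈ A :=
  Nat.frequently_atTop_iff_infinite.2 (by rw [inter_comm] at h; exact h.preimage')

lemma not_tendsto_of_frequently_le_dist {ι α : Type*} [PseudoMetricSpace α] {l : Filter ι}
    {u : ι → α} {y : α} {ε : ℝ} (hε : 0 < ε) (h : ∃ᶠ i in l, ε ≤ dist (u i) y) :
    ¬ Tendsto u l (𝓝 y) := fun hu =>
  h ((Metric.tendsto_nhds.1 hu ε hε).mono fun _ hi => not_le.2 hi)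

theorem mad_enumeration_isTestSet_general {X : Type*} [TopologicalSpace X] (P : X)
    (hFU : ∀ A : Set X, P ∈ closure A →
      ∃ a : ℕ → X, (∀ n, a n ∈ A) ∧ Tendsto a atTop (𝓝 P))
    (hT1 : ∀ x : X, x ≠ P → ∃ U : Set X, IsOpen U ∧ P ∈ U ∧ x ∉ U)
    (ℳ : Set (Set X)) (hℳ : IsMadFamily P ℳ)
    (T : Set X → ℕ → X)
    (hT : ∀ M ∈ ℳ, Function.Injective (T M) ∧
      Tendsto (T M) atTop (𝓝 P) ∧ Set.range (T M) = M) :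
    IsTestSet P (T '' ℳ) := by
  refine ⟨fun _ ⟨M, hM, hTM⟩ => hTM ▸ (hT M hM).2.1, fun f hf => ?_⟩
  obtain ⟨ε, hε, hPA⟩ := exists_pos_mem_closure_le_dist_of_not_continuousAt hf
  obtain ⟨a, haA, ha⟩ := hFU _ hPA
  have hne : ∀ n, a n ≠ P := fun n hn => by
    simpa [hn, not_le.2 hε] using haA n
  obtain ⟨N, hN, hinf⟩ := hℳ.2.2 _ (range_mem_rangeFamily hT1 ha hne)
  obtain ⟨-, hTN, hrange⟩ := hT N hN
  refine ⟨T N, mem_image_of_mem T hN, hTN, not_tendsto_of_frequently_le_dist hε ?_⟩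
  refine frequently_mem_of_infinite_range_inter (A := {x | ε ≤ dist (f x) (f P)}) ?_
  rw [hrange]
  refine hinf.mono ?_
  rintro _ ⟨⟨n, rfl⟩, hxN⟩
  exact ⟨hxN, haA n⟩

/-- Under the standing framework, the family of chosen injective enumerations of the
members of a MAD family is a test set. -/
theorem mad_enumeration_isTestSet {X : Type*} [TopologicalSpace X] (P : X)
    (hFU : ∀ A : Set X, P ∈ closure A →
      ∃ a : ℕ → X, (∀ n, a n ∈ A) ∧ Tendsto a atTop (𝓝 P))
    (hT1 : ∀ x : X, x ≠ P → ∃ U : Set X, IsOpen U ∧ P ∈ U ∧ x ∉ U)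
    (hni : ∀ U ∈ 𝓝 P, ∃ x ∈ U, x ≠ P)
    (hD : ∃ f : X → ℝ, ¬ ContinuousAt f P)
    (ℳ : Set (Set X)) (hℳ : IsMadFamily P ℳ)
    (T : Set X → ℕ → X)
    (hT : ∀ M ∈ ℳ, Function.Injective (T M) ∧
      Tendsto (T M) atTop (𝓝 P) ∧ Set.range (T M) = M) :
    IsTestSet P (T '' ℳ) :=
  mad_enumeration_isTestSet_general P hFU hT1 ℳ hℳ T hT
end

section
/- Let X be a topological space and P ∈ X; assume (X,P) is Fréchet–Urysohn at P, X is T1 at P, P is non-isolated, and D_P ≠ ∅. Let M ⊆ I_P be a MAD family, and for each M ∈ M let T^M : ℕ → X be an injective sequence converging to P with range M. Then A_min := {T^M : M ∈ M} is a minimal test set: A_min is a test set, and no proper subset of A_min is a test set. -/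
open Filter Topology Set

/-!
For `f` discontinuous at `P`, the set `{x | ε ≤ |f x - f P|}` accumulates at `P`, so by the
Fréchet–Urysohn property it contains a sequence converging to `P`; T1 at `P` makes its range a
member of `I_P`. Maximality gives `M ∈ ℳ` meeting that range infinitely often, and along `T^M`
the values of `f` then stay `ε` away from `f P` infinitely often.

For minimality, the indicator of `M ∈ ℳ` is discontinuous at `P`, while for every other
`N ∈ ℳ` it vanishes eventually along the injective enumeration `T^N`, since `N ∩ M` is finite.
So any test set inside `{T^N : N ∈ ℳ}` must contain `T^M`.
-/

section General

lemma frequently_mem_of_infinite_inter_range {X : Type*} {T : ℕ → X} {S : Set X}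
    (h : (S ∩ range T).Infinite) : ∃ᶠ n in atTop, T n ∈ S := by
  rw [Nat.frequently_atTop_iff_infinite]
  exact fun hfin => h ((hfin.image T).subset (by rintro _ ⟨hS, n, rfl⟩; exact ⟨n, hS, rfl⟩))

lemma tendsto_indicator_one_comp_of_finite_preimage {X : Type*} {T : ℕ → X} {M : Set X}
    (h : (T ⁻¹' M).Finite) :
    Tendsto (fun n => M.indicator (1 : X → ℝ) (T n)) atTop (𝓝 0) := by
  refine tendsto_const_nhds.congr' ?_
  rw [EventuallyEq, ← Nat.cofinite_eq_atTop]
  exact h.eventually_cofinite_notMem.mono fun n hn => (indicator_of_notMem hn 1).symm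

variable {X : Type*} [TopologicalSpace X] {P : X}

lemma exists_pos_frequently_le_dist_of_not_continuousAt {Y : Type*} [PseudoMetricSpace Y]
    {f : X → Y} (h : ¬ ContinuousAt f P) :
    ∃ ε > 0, ∃ᶠ x in 𝓝 P, ε ≤ dist (f x) (f P) := by
  simpa [ContinuousAt, Metric.tendsto_nhds, Filter.not_eventually] using h

lemma Filter.Tendsto.finite_range_diff {a : ℕ → X} (ha : Tendsto a atTop (𝓝 P))
    {U : Set X} (hU : U ∈ 𝓝 P) : (range a \ U).Finite := by
  have hfin : (a ⁻¹' U)ᶜ.Finite := mem_cofinite.mp (Nat.cofinite_eq_atTop ▸ ha hU)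
  exact (hfin.image a).subset (by rintro _ ⟨⟨n, rfl⟩, hn⟩; exact ⟨n, hn, rfl⟩)

lemma infinite_range_of_tendsto_of_forall_ne
    (hT1 : ∀ x : X, x ≠ P → ∃ U : Set X, IsOpen U ∧ P ∈ U ∧ x ∉ U)
    {a : ℕ → X} (ha : Tendsto a atTop (𝓝 P)) (hne : ∀ n, a n ≠ P) : (range a).Infinite := by
  intro hfin
  have hsep : ∀ x ∈ range a, {x}ᶜ ∈ 𝓝 P := by
    rintro _ ⟨n, rfl⟩
    obtain ⟨U, hU, hPU, hnU⟩ := hT1 _ (hne n)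
    exact mem_of_superset (hU.mem_nhds hPU) fun y hy hyn => hnU (hyn ▸ hy)
  have hcompl : (range a)ᶜ ∈ 𝓝 P :=
    mem_of_superset ((biInter_mem hfin).mpr hsep) fun y hy hya => mem_iInter₂.mp hy y hya rfl
  obtain ⟨n, hn⟩ := (ha.eventually_mem hcompl).exists
  exact hn (mem_range_self n)

lemma mem_closure_of_mem_rangeFamily {M : Set X} (hM : M ∈ rangeFamily P) :
    P ∈ closure M := by
  obtain ⟨-, -, hinf, hfin⟩ := hM
  refine mem_closure_iff.mpr fun U hU hPU => ?_
  simpa [inter_comm, sdiff_sdiff_right_self] using (hinf.sdiff (hfin U hU hPU)).nonempty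

lemma not_continuousAt_indicator_one {M : Set X} (hcl : P ∈ closure M) (hP : P ∉ M) :
    ¬ ContinuousAt (M.indicator (1 : X → ℝ)) P := by
  intro hc
  have := mem_closure_iff_nhdsWithin_neBot.mp hcl
  have h0 : Tendsto (M.indicator (1 : X → ℝ)) (𝓝[M] P) (𝓝 0) := by
    simpa [indicator_of_notMem hP] using hc.mono_left nhdsWithin_le_nhds
  have h1 : Tendsto (M.indicator (1 : X → ℝ)) (𝓝[M] P) (𝓝 1) :=
    tendsto_const_nhds.congr'
      (eventually_nhdsWithin_of_forall fun x hx => (indicator_of_mem hx 1).symm)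
  exact one_ne_zero (tendsto_nhds_unique h1 h0)

end General

section MadEnumeration

variable {X : Type*} [TopologicalSpace X] {P : X} {ℳ : Set (Set X)} {T : Set X → ℕ → X}

lemma IsMadFamily.exists_mem_witnessSet
    (hFU : ∀ A : Set X, P ∈ closure A →
      ∃ a : ℕ → X, (∀ n, a n ∈ A) ∧ Tendsto a atTop (𝓝 P))
    (hT1 : ∀ x : X, x ≠ P → ∃ U : Set X, IsOpen U ∧ P ∈ U ∧ x ∉ U)
    (hℳ : IsMadFamily P ℳ) (hT : ∀ M ∈ ℳ, Tendsto (T M) atTop (𝓝 P) ∧ range (T M) = M)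
    {f : X → ℝ} (hf : ¬ ContinuousAt f P) : ∃ M ∈ ℳ, T M ∈ witnessSet P f := by
  obtain ⟨ε, hε, hfreq⟩ := exists_pos_frequently_le_dist_of_not_continuousAt hf
  set S := {x | ε ≤ dist (f x) (f P)}
  obtain ⟨a, haS, ha⟩ := hFU S (mem_closure_iff_frequently.mpr hfreq)
  have hne : ∀ n, a n ≠ P := fun n hn => hε.not_ge (by simpa [S, hn] using haS n)
  obtain ⟨M, hM, hinf⟩ := hℳ.2.2 _ (range_mem_rangeFamily hT1 ha hne)
  obtain ⟨hTM, hrange⟩ := hT M hM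
  refine ⟨M, hM, hTM, fun hlim => ?_⟩
  have hfreqM : ∃ᶠ n in atTop, T M n ∈ S :=
    frequently_mem_of_infinite_inter_range <| hinf.mono <| by
      rw [hrange]
      rintro _ ⟨⟨n, rfl⟩, hx⟩
      exact ⟨haS n, hx⟩
  obtain ⟨n, hfar, hnear⟩ := (hfreqM.and_eventually (Metric.tendsto_nhds.mp hlim ε hε)).exists
  exact hfar.not_gt hnear

lemma IsMadFamily.mem_of_isTestSet (hℳ : IsMadFamily P ℳ)
    (hT : ∀ M ∈ ℳ, Function.Injective (T M) ∧ range (T M) = M)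
    {B : Set (ℕ → X)} (hB : B ⊆ T '' ℳ) (hBtest : IsTestSet P B) {M : Set X} (hM : M ∈ ℳ) :
    T M ∈ B := by
  have hP : P ∉ M := fun h => (hℳ.1 hM).1 h rfl
  obtain ⟨_, hgB, -, hg⟩ := hBtest.2 _
    (not_continuousAt_indicator_one (mem_closure_of_mem_rangeFamily (hℳ.1 hM)) hP)
  obtain ⟨N, hN, rfl⟩ := hB hgB
  obtain rfl | hNM := eq_or_ne N M
  · exact hgB
  obtain ⟨hinj, hrange⟩ := hT N hN
  have hfin : (T N ⁻¹' M).Finite := by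
    rw [← preimage_inter_range, hrange, inter_comm]
    exact (hℳ.2.1 N hN M hM hNM).preimage hinj.injOn
  refine absurd ?_ hg
  rw [indicator_of_notMem hP]
  exact tendsto_indicator_one_comp_of_finite_preimage hfin

end MadEnumeration

theorem mad_enumeration_isMinimalTestSet_general {X : Type*} [TopologicalSpace X] (P : X)
    (hFU : ∀ A : Set X, P ∈ closure A →
      ∃ a : ℕ → X, (∀ n, a n ∈ A) ∧ Tendsto a atTop (𝓝 P))
    (hT1 : ∀ x : X, x ≠ P → ∃ U : Set X, IsOpen U ∧ P ∈ U ∧ x ∉ U)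
    (ℳ : Set (Set X)) (hℳ : IsMadFamily P ℳ)
    (T : Set X → ℕ → X)
    (hT : ∀ M ∈ ℳ, Function.Injective (T M) ∧
      Tendsto (T M) atTop (𝓝 P) ∧ Set.range (T M) = M) :
    IsTestSet P (T '' ℳ) ∧
      ∀ B : Set (ℕ → X), B ⊂ T '' ℳ → ¬ IsTestSet P B := by
  refine ⟨⟨?_, fun f hf => ?_⟩, fun B hB hBtest => ?_⟩
  · rintro _ ⟨M, hM, rfl⟩
    exact (hT M hM).2.1
  · obtain ⟨M, hM, hTM⟩ := hℳ.exists_mem_witnessSet hFU hT1 (fun M hM => (hT M hM).2) hf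
    exact ⟨T M, mem_image_of_mem T hM, hTM⟩
  · obtain ⟨_, ⟨M, hM, rfl⟩, hMB⟩ := exists_of_ssubset hB
    exact hMB (hℳ.mem_of_isTestSet (fun M hM => ⟨(hT M hM).1, (hT M hM).2.2⟩) hB.1 hBtest hM)

/-- Under the standing framework, the family of chosen injective enumerations of the
members of a MAD family is a minimal test set: it is a test set and no proper subset
of it is a test set. -/
theorem mad_enumeration_isMinimalTestSet {X : Type*} [TopologicalSpace X] (P : X)
    (hFU : ∀ A : Set X, P ∈ closure A →
      ∃ a : ℕ → X, (∀ n, a n ∈ A) ∧ Tendsto a atTop (𝓝 P))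
    (hT1 : ∀ x : X, x ≠ P → ∃ U : Set X, IsOpen U ∧ P ∈ U ∧ x ∉ U)
    (hni : ∀ U ∈ 𝓝 P, ∃ x ∈ U, x ≠ P)
    (hD : ∃ f : X → ℝ, ¬ ContinuousAt f P)
    (ℳ : Set (Set X)) (hℳ : IsMadFamily P ℳ)
    (T : Set X → ℕ → X)
    (hT : ∀ M ∈ ℳ, Function.Injective (T M) ∧
      Tendsto (T M) atTop (𝓝 P) ∧ Set.range (T M) = M) :
    IsTestSet P (T '' ℳ) ∧
      ∀ B : Set (ℕ → X), B ⊂ T '' ℳ → ¬ IsTestSet P B :=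
  mad_enumeration_isMinimalTestSet_general P hFU hT1 ℳ hℳ T hT
end

section
/- Let S_ω be the sequential fan with distinguished point P, and for each n ∈ ℕ let T_n : ℕ → S_ω be the canonical spoke sequence T_n(k) = x_{n,k}. Then the countable family A_min^fan = {T_n : n ∈ ℕ} is a minimal test set at P, and the set S_P of all sequences in S_ω converging to P has cardinality 2^{ℵ_0}; in particular, the cardinality of A_min^fan (namely ℵ_0) is strictly smaller than that of S_P. -/
open Filter Topology Set

/-- The underlying set of the sequential fan: `P = none`, `x_{n,m} = some (n, m)`. -/
abbrev SeqFan : Type := Option (ℕ × ℕ)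

/-- The fan point `P`. -/
def fanPt : SeqFan := none

/-- The topology of the sequential fan: every point `some (n, m)` is isolated, and a set
`U` containing `none` is open iff it contains a cofinite tail of every spoke. -/
instance : TopologicalSpace SeqFan where
  IsOpen U := none ∈ U → ∀ n : ℕ, {m : ℕ | some (n, m) ∉ U}.Finite
  isOpen_univ := by intro _ n; simp
  isOpen_inter := by
    intro s t hs ht hmem n
    have h : {m : ℕ | some (n, m) ∉ s ∩ t} ⊆
        {m : ℕ | some (n, m) ∉ s} ∪ {m : ℕ | some (n, m) ∉ t} := by
      intro m hm
      by_cases h1 : some (n, m) ∈ s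
      · exact Or.inr fun h2 => hm ⟨h1, h2⟩
      · exact Or.inl h1
    exact ((hs hmem.1 n).union (ht hmem.2 n)).subset h
  isOpen_sUnion := by
    intro S hS hmem n
    obtain ⟨t, htS, hnt⟩ := hmem
    exact ((hS t htS hnt n).subset (fun m hm => fun h => hm ⟨t, htS, h⟩))

/-- The `n`-th spoke of the sequential fan. -/
def spoke (n : ℕ) : Set SeqFan := Set.range fun m : ℕ => (some (n, m) : SeqFan)

/-- The family `I_P` at the fan point: countably infinite subsets of `S_ω \ {P}` that are
almost contained in every open neighborhood of `P`. -/
def fanRangeFamily : Set (Set SeqFan) :=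
  {M | M ⊆ {fanPt}ᶜ ∧ M.Countable ∧ M.Infinite ∧
    ∀ U : Set SeqFan, IsOpen U → fanPt ∈ U → (M \ U).Finite}

/-- The family `S_P` of sequences in the fan converging to `P`. -/
def fanSeqTo : Set (ℕ → SeqFan) := {T | Tendsto T atTop (𝓝 fanPt)}

/-- The witness family `D(f)`. -/
def fanWitnessSet (f : SeqFan → ℝ) : Set (ℕ → SeqFan) :=
  {T | Tendsto T atTop (𝓝 fanPt) ∧ ¬ Tendsto (fun n => f (T n)) atTop (𝓝 (f fanPt))}

/-- `A` is a test set at the fan point `P`. -/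
def FanIsTestSet (A : Set (ℕ → SeqFan)) : Prop :=
  A ⊆ fanSeqTo ∧ ∀ f : SeqFan → ℝ, ¬ ContinuousAt f fanPt → (A ∩ fanWitnessSet f).Nonempty

/-- The canonical spoke sequence `T_n(k) = x_{n,k}`. -/
def spokeSeq (n : ℕ) : ℕ → SeqFan := fun k => some (n, k)

/-!
A set containing `P` is a neighbourhood of `P` exactly when it contains a tail of every spoke,
so `f` is continuous at `P` iff `f` converges to `f P` along every spoke sequence: the spoke
sequences form a test set. Removing the `n`-th one loses the test set property, witnessed by the
indicator of the `n`-th spoke, which is discontinuous at `P` but constant along every other spoke.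
For the cardinality, sequences `k ↦ x_{b k, k}` with `b : ℕ → {0, 1}` converge to `P` and give
`2^ℵ₀` of them, while `S_ω` is countable, so there are at most `ℵ₀^ℵ₀ = 2^ℵ₀`.
-/

lemma mem_nhds_fanPt_iff {U : Set SeqFan} :
    U ∈ 𝓝 fanPt ↔ fanPt ∈ U ∧ ∀ n, ∀ᶠ m in atTop, spokeSeq n m ∈ U := by
  simp only [← Nat.cofinite_eq_atTop, eventually_cofinite, spokeSeq]
  refine ⟨fun hU => ⟨mem_of_mem_nhds hU, fun n => ?_⟩, fun ⟨hP, hspokes⟩ => ?_⟩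
  · obtain ⟨V, hVU, hV, hPV⟩ := mem_nhds_iff.1 hU
    exact (hV hPV n).subset fun m hm hmV => hm (hVU hmV)
  · exact IsOpen.mem_nhds (fun _ => hspokes) hP

lemma tendsto_spokeSeq (n : ℕ) : Tendsto (spokeSeq n) atTop (𝓝 fanPt) :=
  fun _ hU => (mem_nhds_fanPt_iff.1 hU).2 n

lemma tendsto_fanPt_of_finite_range {g : ℕ → ℕ} (hg : (range g).Finite) :
    Tendsto (fun k => (some (g k, k) : SeqFan)) atTop (𝓝 fanPt) :=
  fun _ hU => ((eventually_all_finite hg).2 fun n _ => (mem_nhds_fanPt_iff.1 hU).2 n).mono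
    fun k hk => hk (g k) (mem_range_self k)

lemma continuousAt_fanPt_iff {X : Type*} [TopologicalSpace X] {f : SeqFan → X} :
    ContinuousAt f fanPt ↔ ∀ n, Tendsto (f ∘ spokeSeq n) atTop (𝓝 (f fanPt)) := by
  refine ⟨fun hf n => hf.tendsto.comp (tendsto_spokeSeq n), fun h V hV => ?_⟩
  exact mem_nhds_fanPt_iff.2 ⟨mem_preimage.2 (mem_of_mem_nhds hV), fun n => h n hV⟩

lemma spokeSeq_injective : Function.Injective spokeSeq := fun n m h => by
  simpa [spokeSeq] using congrFun h 0

lemma spokeSeq_mem_fanWitnessSet_iff {f : SeqFan → ℝ} {n : ℕ} :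
    spokeSeq n ∈ fanWitnessSet f ↔ ¬ Tendsto (f ∘ spokeSeq n) atTop (𝓝 (f fanPt)) :=
  and_iff_right (tendsto_spokeSeq n)

lemma isTestSet_range_spokeSeq : FanIsTestSet (range spokeSeq) := by
  refine ⟨range_subset_iff.2 tendsto_spokeSeq, fun f hf => ?_⟩
  obtain ⟨n, hn⟩ := not_forall.1 (mt continuousAt_fanPt_iff.2 hf)
  exact ⟨spokeSeq n, mem_range_self n, spokeSeq_mem_fanWitnessSet_iff.2 hn⟩

lemma indicator_spoke_comp_spokeSeq (n₀ n : ℕ) :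
    (spoke n₀).indicator (1 : SeqFan → ℝ) ∘ spokeSeq n = fun _ => if n = n₀ then 1 else 0 := by
  ext k
  simp [spoke, spokeSeq, Set.indicator, eq_comm]

lemma spokeSeq_mem_fanWitnessSet_indicator_spoke_iff {n₀ n : ℕ} :
    spokeSeq n ∈ fanWitnessSet ((spoke n₀).indicator 1) ↔ n = n₀ := by
  have hP : (spoke n₀).indicator (1 : SeqFan → ℝ) fanPt = 0 := by simp [spoke, fanPt]
  rw [spokeSeq_mem_fanWitnessSet_iff, indicator_spoke_comp_spokeSeq, hP, tendsto_const_nhds_iff]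
  split_ifs <;> simp_all

lemma FanIsTestSet.spokeSeq_mem {A : Set (ℕ → SeqFan)} (hA : FanIsTestSet A)
    (hA_sub : A ⊆ range spokeSeq) (n : ℕ) : spokeSeq n ∈ A := by
  have hdisc : ¬ ContinuousAt ((spoke n).indicator (1 : SeqFan → ℝ)) fanPt := fun hc =>
    (spokeSeq_mem_fanWitnessSet_indicator_spoke_iff.2 rfl).2
      (hc.tendsto.comp (tendsto_spokeSeq n))
  obtain ⟨T, hTA, hT⟩ := hA.2 _ hdisc
  obtain ⟨m, rfl⟩ := hA_sub hTA
  rwa [spokeSeq_mem_fanWitnessSet_indicator_spoke_iff.1 hT] at hTA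

lemma mk_fanSeqTo : Cardinal.mk fanSeqTo = 2 ^ Cardinal.aleph0 := by
  apply le_antisymm
  · calc Cardinal.mk fanSeqTo ≤ Cardinal.mk (ℕ → SeqFan) := Cardinal.mk_set_le _
      _ = Cardinal.aleph0 ^ Cardinal.aleph0 := by
          rw [← Cardinal.power_def, Cardinal.mk_nat, Cardinal.mk_eq_aleph0 SeqFan]
      _ = 2 ^ Cardinal.aleph0 := Cardinal.power_self_eq le_rfl
  · have hinj : Function.Injective fun b : ℕ → Fin 2 =>
        (⟨_, tendsto_fanPt_of_finite_range (g := fun k => b k) <|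
          (finite_range Fin.val).subset (range_comp_subset_range b _)⟩ : fanSeqTo) :=
      fun b b' h => funext fun k => Fin.ext <| by simpa using congrFun (congrArg Subtype.val h) k
    calc (2 : Cardinal) ^ Cardinal.aleph0 = Cardinal.mk (ℕ → Fin 2) := by
          rw [← Cardinal.power_def, Cardinal.mk_fin, Cardinal.mk_nat, Nat.cast_ofNat]
      _ ≤ Cardinal.mk fanSeqTo := Cardinal.mk_le_of_injective hinj

/-- In the sequential fan, the countable family of canonical spoke sequences is a minimal
test set at `P`, the full family `S_P` has cardinality `2^ℵ₀`, and in particular the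
minimal test set (of cardinality `ℵ₀`) is strictly smaller than `S_P`. -/
theorem fan_minimal_testSet_card :
    FanIsTestSet (Set.range spokeSeq) ∧
      (∀ B : Set (ℕ → SeqFan), B ⊂ Set.range spokeSeq → ¬ FanIsTestSet B) ∧
      Cardinal.mk (Set.range spokeSeq) = Cardinal.aleph0 ∧
      Cardinal.mk fanSeqTo = 2 ^ Cardinal.aleph0 ∧
      Cardinal.mk (Set.range spokeSeq) < Cardinal.mk fanSeqTo := by
  have hcard : Cardinal.mk (range spokeSeq) = Cardinal.aleph0 := by
    rw [Cardinal.mk_range_eq _ spokeSeq_injective, Cardinal.mk_nat]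
  refine ⟨isTestSet_range_spokeSeq, fun B hB hBtest => ?_, hcard, mk_fanSeqTo, ?_⟩
  · exact hB.not_subset (range_subset_iff.2 (hBtest.spokeSeq_mem hB.subset))
  · rw [hcard, mk_fanSeqTo]
    exact Cardinal.cantor _
end
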